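/- For any x ∈ [0,∞)ⁿ the following are equivalent: (1) x is a boundary equilibrium, i.e. f(x) = 0 and some coordinate of x is zero; (2) for every j ∈ {1,…,m} there is some k ∈ S_j with x_k = 0; (3) for every j ∈ {1,…,m}, θ(x₁)^{b_{1j}} θ(x₂)^{b_{2j}} ⋯ θ(xₙ)^{b_{nj}} = 0. -/

import Mathlib

/-! Let `S` be the set of columns `j` whose monomial `∏ θ(x_l)^{B l j}` is positive, i.e. whose
support avoids the zero coordinates of `x`. For a zero coordinate `k`, every term
`A i j θ(x)^{b_j} (B k i - B k j)` of `f_k` is nonnegative (since `B k j = 0` for `j ∈ S`), so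
`f_k = 0` forces `B k i = 0` whenever `A i j > 0` and `j ∈ S`. Thus `S` is closed under the edges
of `A`, and by irreducibility it is empty or everything; it is not everything as soon as some
coordinate vanishes, because every row of `B` has a nonzero entry. -/

namespace Matrix

variable {ι R : Type*} [Fintype ι] [DecidableEq ι] [Semiring R] [LinearOrder R]
  [IsStrictOrderedRing R] {M : Matrix ι ι R} {S : Set ι}

theorem mem_of_pow_apply_pos (hM : ∀ i j, 0 ≤ M i j) (hS : ∀ i j, 0 < M i j → j ∈ S → i ∈ S) :
    ∀ (k : ℕ) {i j : ι}, 0 < (M ^ k) i j → j ∈ S → i ∈ S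
  | 0, i, j, hij, hj => by
    obtain rfl : i = j := by by_contra h; simp [one_apply_ne h] at hij
    exact hj
  | k + 1, i, j, hij, hj => by
    rw [pow_succ, mul_apply, Finset.sum_pos_iff_of_nonneg
      fun l _ => mul_nonneg (pow_apply_nonneg hM k i l) (hM l j)] at hij
    obtain ⟨l, -, hl⟩ := hij
    exact mem_of_pow_apply_pos hM hS k (pos_of_mul_pos_left hl (hM l j))
      (hS l j (pos_of_mul_pos_right hl (pow_apply_nonneg hM k i l)) hj)

theorem eq_univ_of_one_add_pow_pos {A : Matrix ι ι R} (hA : ∀ i j, 0 ≤ A i j) {p : ℕ}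
    (hirr : ∀ i j, 0 < ((1 + A) ^ p) i j) (hS : ∀ i j, 0 < A i j → j ∈ S → i ∈ S)
    (hne : S.Nonempty) : S = Set.univ := by
  obtain ⟨j, hj⟩ := hne
  have hA1 : ∀ i j, 0 ≤ (1 + A) i j := fun i j => by
    rw [add_apply, one_apply]; exact add_nonneg (by split_ifs <;> simp) (hA i j)
  have hS1 : ∀ i j, 0 < (1 + A) i j → j ∈ S → i ∈ S := fun i j hij hj => by
    obtain rfl | hne := eq_or_ne i j
    · exact hj
    · rw [add_apply, one_apply_ne hne, zero_add] at hij
      exact hS i j hij hj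
  exact Set.eq_univ_of_forall fun i => mem_of_pow_apply_pos hA1 hS1 p (hirr i j) hj

end Matrix

section

variable {ι κ R : Type*} [Fintype ι] [Ring R] [LinearOrder R] [IsStrictOrderedRing R]

theorem eq_zero_of_sum_mul_sub_eq_zero {A : Matrix ι ι R} (hA : ∀ i j, 0 ≤ A i j)
    {c b : ι → R} (hc : ∀ j, 0 ≤ c j) (hb : ∀ j, 0 ≤ b j) (hbc : ∀ j, 0 < c j → b j = 0)
    (hsum : ∑ i, ∑ j, A i j * c j * (b i - b j) = 0) {i j : ι} (hAij : 0 < A i j)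
    (hcj : 0 < c j) : b i = 0 := by
  have hterm : ∀ i j, 0 ≤ A i j * c j * (b i - b j) := fun i j => by
    rcases (hc j).eq_or_lt with h | h
    · simp [← h]
    · rw [hbc j h, sub_zero]
      exact mul_nonneg (mul_nonneg (hA i j) h.le) (hb i)
  have hrow := congrFun ((Fintype.sum_eq_zero_iff_of_nonneg
    fun i => Finset.sum_nonneg fun j _ => hterm i j).mp hsum) i
  have hij := congrFun ((Fintype.sum_eq_zero_iff_of_nonneg (hterm i)).mp hrow) j
  simpa [hbc j hcj, hAij.ne', hcj.ne'] using hij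

variable [DecidableEq ι]

theorem eq_zero_of_sum_mul_sub_eq_zero_of_one_add_pow_pos {A : Matrix ι ι R}
    (hA : ∀ i j, 0 ≤ A i j) {p : ℕ} (hirr : ∀ i j, 0 < ((1 + A) ^ p) i j)
    {B : Matrix κ ι R} (hB : ∀ k j, 0 ≤ B k j) (hBrow : ∀ k, ∃ j, B k j ≠ 0)
    {c : ι → R} (hc : ∀ j, 0 ≤ c j) {z : Set κ} (hc0 : ∀ j, c j = 0 ↔ ∃ k ∈ z, 0 < B k j)
    (hsum : ∀ k ∈ z, ∑ i, ∑ j, A i j * c j * (B k i - B k j) = 0) (hz : z.Nonempty) (j : ι) :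
    c j = 0 := by
  by_contra! hj
  have hclosed : ∀ i j, 0 < A i j → j ∈ {j | 0 < c j} → i ∈ {j | 0 < c j} := by
    intro i j hAij hcj
    refine (hc i).lt_of_ne' fun hci => ?_
    obtain ⟨k, hk, hBki⟩ := (hc0 i).mp hci
    have hbc : ∀ j, 0 < c j → B k j = 0 := fun j hcj => by
      by_contra h
      exact hcj.ne' ((hc0 j).mpr ⟨k, hk, (hB k j).lt_of_ne' h⟩)
    exact hBki.ne' (eq_zero_of_sum_mul_sub_eq_zero hA hc (hB k) hbc (hsum k hk) hAij hcj)
  have hpos := Matrix.eq_univ_of_one_add_pow_pos hA hirr hclosed ⟨j, (hc j).lt_of_ne' hj⟩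
  obtain ⟨k, hk⟩ := hz
  obtain ⟨j', hj'⟩ := hBrow k
  have hcj' : 0 < c j' := Set.eq_univ_iff_forall.mp hpos j'
  exact hcj'.ne' ((hc0 j').mpr ⟨k, hk, (hB k j').lt_of_ne' hj'⟩)

end

theorem Real.prod_rpow_eq_zero_iff {ι : Type*} [Fintype ι] {t e : ι → ℝ} (ht : ∀ l, 0 ≤ t l)
    (he : ∀ l, 0 ≤ e l) : ∏ l, t l ^ e l = 0 ↔ ∃ l, 0 < e l ∧ t l = 0 := by
  rw [Finset.prod_eq_zero_iff]
  simp only [Finset.mem_univ, true_and, Real.rpow_eq_zero_iff_of_nonneg (ht _)]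
  exact exists_congr fun l => ⟨fun h => ⟨(he l).lt_of_ne' h.2, h.1⟩, fun h => ⟨h.2, h.1.ne'⟩⟩

theorem stmt_12
    (n m : ℕ) (hm : 0 < m)
    (θ : ℝ → ℝ)
    (hθ0 : θ 0 = 0)
    (hθmono : StrictMonoOn θ (Set.Ici (0:ℝ)))
    (A : Matrix (Fin m) (Fin m) ℝ)
    (hAnn : ∀ i j, 0 ≤ A i j)
    (hAirr : ∀ i j, 0 < ((1 + A) ^ (m - 1)) i j)
    (B : Matrix (Fin n) (Fin m) ℝ)
    (hBnn : ∀ k j, 0 ≤ B k j)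
    (hBrow : ∀ k, ∃ j, B k j ≠ 0)
    (f : EuclideanSpace ℝ (Fin n) → EuclideanSpace ℝ (Fin n))
    (hf : ∀ x : EuclideanSpace ℝ (Fin n), ∀ k : Fin n,
      f x k = ∑ i : Fin m, ∑ j : Fin m,
        A i j * (∏ l : Fin n, θ (x l) ^ (B l j)) * (B k i - B k j))
    :
    ∀ x : EuclideanSpace ℝ (Fin n), (∀ k, 0 ≤ x k) →
      (((f x = 0 ∧ ∃ k, x k = 0) ↔ (∀ j : Fin m, ∃ k, 0 < B k j ∧ x k = 0)) ∧
       ((∀ j : Fin m, ∃ k, 0 < B k j ∧ x k = 0) ↔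
        (∀ j : Fin m, (∏ l : Fin n, θ (x l) ^ (B l j)) = 0))) := by
  intro x hx
  have hθx : ∀ l, θ (x l) = 0 ↔ x l = 0 := fun l => by
    rw [← hθmono.injOn.eq_iff (hx l) Set.self_mem_Ici, hθ0]
  have hθnn : ∀ l, 0 ≤ θ (x l) := fun l =>
    hθ0 ▸ hθmono.monotoneOn Set.self_mem_Ici (hx l) (hx l)
  have hc0 : ∀ j, ∏ l, θ (x l) ^ B l j = 0 ↔ ∃ k ∈ {k | x k = 0}, 0 < B k j := fun j => by
    simp only [Real.prod_rpow_eq_zero_iff hθnn (hBnn · j), hθx, Set.mem_ofPred_eq, and_comm]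
  have h23 : (∀ j, ∃ k, 0 < B k j ∧ x k = 0) ↔ ∀ j, ∏ l, θ (x l) ^ B l j = 0 :=
    forall_congr' fun j => by simp only [hc0, Set.mem_ofPred_eq, and_comm]
  refine ⟨⟨fun ⟨hfx, hz⟩ => h23.mpr fun j => ?_, fun h => ⟨?_, ?_⟩⟩, h23⟩
  · exact eq_zero_of_sum_mul_sub_eq_zero_of_one_add_pow_pos hAnn hAirr hBnn hBrow
      (fun j => Finset.prod_nonneg fun l _ => Real.rpow_nonneg (hθnn l) _) hc0
      (fun k _ => by rw [← hf, hfx]; rfl) hz j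
  · ext k
    simp [hf, h23.mp h]
  · obtain ⟨k, -, hk⟩ := h ⟨0, hm⟩
    exact ⟨k, hk⟩
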